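/- arXiv:2505.08602 — 4 statements merged into one kernel-verified Lean document; each statement's English description precedes it below -/
import Mathlib

section
/- Let A₀ be a densely defined, skew-symmetric, closed operator on a Hilbert space X and ((B₊,B₋), B₁, B₂) a boundary triple for A := A₀*. Suppose x ∈ dom A satisfies Ax = iλ x for some λ ∈ ℝ, and x satisfies the boundary condition B₁x = −j₋ k j₊ B₂x for a positive semi-definite k ∈ L(B₀) (with B₊ ⊆ B₀ ⊆ B₋ a Gelfand triple). Then k^{1/2} j₊ B₂ x = 0, and hence k j₊ B₂ x = 0 and B₁ x = 0. -/
open scoped ComplexConjugate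

local notation "⟪" x ", " y "⟫" => @inner ℂ _ _ x y

/-- Boundary values of eigenvectors: let `((B₋,B₊), B₁, B₂)` be a boundary triple for
`A = A₀*` (abstract Green identity below), `B₊ ⊆ B₀ ⊆ B₋` a Gelfand triple with embeddings
`j₊, j₋` and dual pairing `pair` extending the `B₀` inner product.  If `x ∈ dom A`
satisfies `A x = iλ x` with `λ ∈ ℝ` and the boundary condition `B₁ x = -j₋ k j₊ B₂ x`
for positive semi-definite `k ∈ L(B₀)` (with positive square root `s`), then
`k^{1/2} j₊ B₂ x = 0`, hence `k j₊ B₂ x = 0` and `B₁ x = 0`. -/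
theorem stmt8
    {X Bp B0 Bm : Type*}
    [NormedAddCommGroup X] [InnerProductSpace ℂ X] [CompleteSpace X]
    [NormedAddCommGroup Bp] [InnerProductSpace ℂ Bp] [CompleteSpace Bp]
    [NormedAddCommGroup B0] [InnerProductSpace ℂ B0] [CompleteSpace B0]
    [NormedAddCommGroup Bm] [InnerProductSpace ℂ Bm] [CompleteSpace Bm]
    (D : Submodule ℂ X) (A : D →ₗ[ℂ] X)
    (hdense : Dense (D : Set X))
    (pair : Bm → Bp → ℂ)
    (B1 : D →ₗ[ℂ] Bm) (B2 : D →ₗ[ℂ] Bp)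
    (hsurj : ∀ (g : Bm) (p : Bp), ∃ x : D, B1 x = g ∧ B2 x = p)
    (hGreen : ∀ x y : D, ⟪A x, (y : X)⟫ + ⟪(x : X), A y⟫
        = pair (B1 x) (B2 y) + conj (pair (B1 y) (B2 x)))
    (jp : Bp →L[ℂ] B0) (jm : B0 →L[ℂ] Bm)
    (hpair : ∀ (h : B0) (u : Bp), pair (jm h) u = ⟪h, jp u⟫)
    (hjminj : Function.Injective jm)
    (k s : B0 →L[ℂ] B0) (hk : k.IsPositive) (hs : s.IsPositive) (hss : s ∘L s = k)
    (x : D) (l : ℝ) (hx : A x = ((l : ℂ) * Complex.I) • (x : X))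
    (hbc : B1 x = -(jm (k (jp (B2 x))))) :
    s (jp (B2 x)) = 0 ∧ k (jp (B2 x)) = 0 ∧ B1 x = 0 := by
  set u := jp (B2 x) with hu
  -- LHS of Green identity at (x,x) is zero
  have hGx := hGreen x x
  have hlhs : ⟪A x, (x : X)⟫ + ⟪(x : X), A x⟫ = 0 := by
    rw [hx, inner_smul_left, inner_smul_right]
    have : conj ((l : ℂ) * Complex.I) = -((l : ℂ) * Complex.I) := by
      simp [Complex.ext_iff]
    rw [this]; ring
  -- pair (B1 x) (B2 x) = -⟪s u, s u⟫
  have hbc' : B1 x = jm (-(k u)) := by rw [hbc]; simp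
  have hpval : pair (B1 x) (B2 x) = -⟪s u, s u⟫ := by
    rw [hbc', hpair, ← hu]
    have hk' : k u = s (s u) := by rw [← hss]; rfl
    rw [inner_neg_left, hk']
    congr 1
    calc ⟪s (s u), u⟫ = ⟪s u, (ContinuousLinearMap.adjoint s) u⟫ := by
          rw [← ContinuousLinearMap.adjoint_inner_right]
      _ = ⟪s u, s u⟫ := by rw [ContinuousLinearMap.isSelfAdjoint_iff'.mp hs.isSelfAdjoint]
  have hreal : conj (⟪s u, s u⟫ : ℂ) = ⟪s u, s u⟫ := inner_self_conj _
  have hzero : (⟪s u, s u⟫ : ℂ) = 0 := by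
    have : (0 : ℂ) = -⟪s u, s u⟫ + conj (-⟪s u, s u⟫) := by
      rw [← hpval, ← hGx, hlhs]
    rw [map_neg, hreal] at this
    linear_combination this / 2
  have hsu : s u = 0 := inner_self_eq_zero.mp hzero
  have hku : k u = 0 := by rw [← hss]; show s (s u) = 0; rw [hsu, map_zero]
  exact ⟨hsu, hku, by rw [hbc, hku]; simp⟩
end

section
/- Let Ω ⊆ ℝ^d be a bounded Lipschitz domain, T, ρ ∈ L(L²(Ω)) boundedly invertible with c⁻¹I < T < cI and c⁻¹I < ρ < cI. Define the operator A on X = H¹(Ω) × L²(Ω) by A(x₁,x₂) = (ρ⁻¹x₂, div T∇x₁) with domain {(x₁,x₂) : ρ⁻¹x₂ ∈ H¹(Ω), T∇x₁ ∈ H(div,Ω)}, where X carries the norm ‖(x₁,x₂)‖² = ⟨ρ⁻¹x₂,x₂⟩ + ⟨T∇x₁,∇x₁⟩ + ⟨k₁γ₀x₁,γ₀x₁⟩. Then A is a closed operator. -/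
open Filter

local notation "⟪" x ", " y "⟫" => @inner ℂ _ _ x y

/-- The wave operator `A(x₁,x₂) = (ρ⁻¹x₂, div T∇x₁)` on `X = H¹(Ω) × L²(Ω)` with domain
`{(x₁,x₂) : ρ⁻¹x₂ ∈ H¹(Ω), T∇x₁ ∈ H(div,Ω)}` is closed (its graph is closed in `X × X`).
Abstract setting: `H1 = H¹(Ω)` with `‖f‖² = ‖ι f‖² + ‖grad f‖²` (`ι : H¹ → L²` the
injective embedding), `Ddiv = H(div,Ω)` with the closed divergence operator `dvg`,
`γ : H¹ → L²(∂Ω)` the Dirichlet trace, `T`, `ρ⁻¹` bounded, positive and boundedly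
invertible, `k₁` positive semi-definite (so that the energy-plus-boundary expression
is an equivalent norm on `X`; closedness is independent of the equivalent norm). -/
theorem stmt10
    {H1 L2 L2d B0 : Type*}
    [NormedAddCommGroup H1] [InnerProductSpace ℂ H1] [CompleteSpace H1]
    [NormedAddCommGroup L2] [InnerProductSpace ℂ L2] [CompleteSpace L2]
    [NormedAddCommGroup L2d] [InnerProductSpace ℂ L2d] [CompleteSpace L2d]
    [NormedAddCommGroup B0] [InnerProductSpace ℂ B0] [CompleteSpace B0]
    (ι : H1 →L[ℂ] L2) (grad : H1 →L[ℂ] L2d) (γ : H1 →L[ℂ] B0)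
    (hιinj : Function.Injective ι)
    (hnormH1 : ∀ f : H1, ‖f‖ ^ 2 = ‖ι f‖ ^ 2 + ‖grad f‖ ^ 2)
    (Ddiv : Submodule ℂ L2d) (dvg : Ddiv →ₗ[ℂ] L2)
    (hdivclosed : ∀ (F : ℕ → Ddiv) (u : L2d) (w : L2),
        Tendsto (fun n => ((F n : L2d))) atTop (nhds u) →
        Tendsto (fun n => dvg (F n)) atTop (nhds w) →
        ∃ hu : u ∈ Ddiv, dvg ⟨u, hu⟩ = w)
    (T Tinv : L2d →L[ℂ] L2d) (hT : T.IsPositive)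
    (hT1 : Tinv ∘L T = 1) (hT2 : T ∘L Tinv = 1)
    (hTbelow : ∃ c > 0, ∀ u : L2d, c * ‖u‖ ^ 2 ≤ (⟪T u, u⟫).re)
    (ρinv ρ : L2 →L[ℂ] L2) (hρinv : ρinv.IsPositive)
    (hρ1 : ρ ∘L ρinv = 1) (hρ2 : ρinv ∘L ρ = 1)
    (hρbelow : ∃ c > 0, ∀ u : L2, c * ‖u‖ ^ 2 ≤ (⟪ρinv u, u⟫).re)
    (k1 : B0 →L[ℂ] B0) (hk1 : k1.IsPositive)
    (hFried : ∃ c > 0, ∀ f : H1,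
        c * ‖f‖ ^ 2 ≤ (⟪T (grad f), grad f⟫).re + (⟪k1 (γ f), γ f⟫).re) :
    IsClosed {p : (H1 × L2) × (H1 × L2) |
      ι p.2.1 = ρinv p.1.2 ∧
      ∃ h : T (grad p.1.1) ∈ Ddiv, dvg ⟨T (grad p.1.1), h⟩ = p.2.2} := by
  have hgraph : IsClosed {q : L2d × L2 | ∃ h : q.1 ∈ Ddiv, dvg ⟨q.1, h⟩ = q.2} := by
    refine IsSeqClosed.isClosed ?_
    intro x p hx hxp
    choose hmem heq using hx
    obtain ⟨hu, hw⟩ := hdivclosed (fun n => ⟨(x n).1, hmem n⟩) p.1 p.2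
      ((continuous_fst.tendsto p).comp hxp)
      (by simpa [heq, Function.comp_def] using (continuous_snd.tendsto p).comp hxp)
    exact ⟨hu, hw⟩
  have h1 : IsClosed {p : (H1 × L2) × (H1 × L2) | ι p.2.1 = ρinv p.1.2} :=
    isClosed_eq (ι.continuous.comp (continuous_fst.comp continuous_snd))
      (ρinv.continuous.comp (continuous_snd.comp continuous_fst))
  have h2 : Continuous (fun p : (H1 × L2) × (H1 × L2) => ((T (grad p.1.1), p.2.2) : L2d × L2)) := by
    exact ((T.continuous.comp (grad.continuous.comp (continuous_fst.comp continuous_fst))).prodMk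
      (continuous_snd.comp continuous_snd))
  exact h1.inter (hgraph.preimage h2)
end

section
/- With the wave operator A(x₁,x₂) = (ρ⁻¹x₂, div T∇x₁) on X = H̊¹_{Γ₀}(Ω) × L²(Ω) (with the energy-plus-boundary inner product ⟨ρ⁻¹x₂,y₂⟩ + ⟨T∇x₁,∇y₁⟩ + ⟨k₁γ₀x₁,γ₀y₁⟩) and the boundary operators B₁x = k₁γ₀x₁ + γ_ν T∇x₁ and B₂x = γ₀(ρ⁻¹x₂), the Green identity ⟨Ax,y⟩_X + ⟨x,Ay⟩_X = ⟨B₁x,B₂y⟩ + ⟨B₂x,B₁y⟩ holds for all x,y ∈ dom A, where the boundary pairings are the H^{-1/2}–H̊^{1/2} dual pairings on Γ̃. -/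
/-!
Moving `ρ⁻¹` across the inner product turns `⟨ρ⁻¹ div T∇x₁, y₂⟩` into `⟨div T∇x₁, ρ⁻¹y₂⟩`,
and integrating by parts against `ρ⁻¹y₂ ∈ H̊¹` cancels the energy term `⟨T∇x₁, ∇(ρ⁻¹y₂)⟩`,
so the `x`-half of the left side is `⟨B₁x, B₂y⟩`.
By symmetry of `ρ⁻¹`, `T` and `k₁` the `y`-half is the complex conjugate of the same expression
with `x` and `y` exchanged, i.e. `⟨B₂x, B₁y⟩`.
-/

open scoped ComplexConjugate

local notation "⟪" x ", " y "⟫" => @inner ℂ _ _ x y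

theorem inner_div_add_inner_grad_add_inner_trace_eq_pair
    {H1 L2 L2d B0 Bp Bm : Type*}
    [NormedAddCommGroup L2] [InnerProductSpace ℂ L2]
    [NormedAddCommGroup L2d] [InnerProductSpace ℂ L2d]
    [NormedAddCommGroup B0] [InnerProductSpace ℂ B0] [AddCommGroup Bm]
    {ι : H1 → L2} {grad : H1 → L2d} {γ : H1 → Bp} {jp : Bp → B0} {jm : B0 → Bm}
    {pair : Bm → Bp → ℂ} (hpair : ∀ h u, pair (jm h) u = ⟪h, jp u⟫)
    (hpair_add : ∀ f g u, pair (f + g) u = pair f u + pair g u)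
    {Ddiv : Submodule ℂ L2d} {dvg : Ddiv → L2} {γν : Ddiv → Bm}
    (hIbP : ∀ F g, ⟪dvg F, ι g⟫ = -⟪(F : L2d), grad g⟫ + pair (γν F) (γ g))
    {ρinv : L2 →L[ℂ] L2} (hρinv : ρinv.IsSymmetric) {y₂ : L2} {v : H1}
    (hv : ι v = ρinv y₂) (F : Ddiv) (h : B0) :
    ⟪ρinv (dvg F), y₂⟫ + ⟪(F : L2d), grad v⟫ + ⟪h, jp (γ v)⟫ = pair (γν F + jm h) (γ v) := by
  have hmove : ⟪ρinv (dvg F), y₂⟫ = ⟪dvg F, ι v⟫ := by rw [hv]; exact hρinv _ _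
  rw [hmove, hIbP, hpair_add, hpair]
  ring

theorem stmt12_general
    {H1 L2 L2d B0 Bp Bm : Type*}
    [NormedAddCommGroup H1] [InnerProductSpace ℂ H1]
    [NormedAddCommGroup L2] [InnerProductSpace ℂ L2]
    [NormedAddCommGroup L2d] [InnerProductSpace ℂ L2d]
    [NormedAddCommGroup B0] [InnerProductSpace ℂ B0]
    [NormedAddCommGroup Bp] [InnerProductSpace ℂ Bp]
    [NormedAddCommGroup Bm] [InnerProductSpace ℂ Bm]
    (ι : H1 →L[ℂ] L2) (grad : H1 →L[ℂ] L2d) (γ : H1 →L[ℂ] Bp)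
    (jp : Bp →L[ℂ] B0) (jm : B0 →L[ℂ] Bm)
    (pair : Bm → Bp → ℂ)
    (hpair : ∀ (h : B0) (u : Bp), pair (jm h) u = ⟪h, jp u⟫)
    (hpair_add : ∀ f g : Bm, ∀ u : Bp, pair (f + g) u = pair f u + pair g u)
    (Ddiv : Submodule ℂ L2d) (dvg : Ddiv →ₗ[ℂ] L2) (γν : Ddiv →ₗ[ℂ] Bm)
    (hIbP : ∀ (F : Ddiv) (g : H1),
        ⟪dvg F, ι g⟫ = -⟪(F : L2d), grad g⟫ + pair (γν F) (γ g))
    (T : L2d →L[ℂ] L2d) (hT : T.IsPositive)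
    (ρinv : L2 →L[ℂ] L2) (hρinv : ρinv.IsPositive)
    (k1 : B0 →L[ℂ] B0) (hk1 : k1.IsPositive)
    (x₁ y₁ : H1) (x₂ y₂ : L2) (u v : H1)
    (hu : ι u = ρinv x₂) (hv : ι v = ρinv y₂)
    (hx : T (grad x₁) ∈ Ddiv) (hy : T (grad y₁) ∈ Ddiv) :
    (⟪ρinv (dvg ⟨T (grad x₁), hx⟩), y₂⟫ + ⟪T (grad u), grad y₁⟫
        + ⟪k1 (jp (γ u)), jp (γ y₁)⟫)
      + (⟪ρinv x₂, dvg ⟨T (grad y₁), hy⟩⟫ + ⟪T (grad x₁), grad v⟫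
        + ⟪k1 (jp (γ x₁)), jp (γ v)⟫)
    = pair (γν ⟨T (grad x₁), hx⟩ + jm (k1 (jp (γ x₁)))) (γ v)
      + conj (pair (γν ⟨T (grad y₁), hy⟩ + jm (k1 (jp (γ y₁)))) (γ u)) := by
  have green_xy := inner_div_add_inner_grad_add_inner_trace_eq_pair hpair hpair_add hIbP
    hρinv.isSymmetric hv ⟨T (grad x₁), hx⟩ (k1 (jp (γ x₁)))
  have green_yx := inner_div_add_inner_grad_add_inner_trace_eq_pair hpair hpair_add hIbP
    hρinv.isSymmetric hu ⟨T (grad y₁), hy⟩ (k1 (jp (γ y₁)))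
  rw [← green_xy, ← green_yx, map_add, map_add, Submodule.coe_mk, inner_conj_symm, inner_conj_symm, inner_conj_symm,
    ← hρinv.inner_left_eq_inner_right, ← hT.inner_left_eq_inner_right,
    ← hk1.inner_left_eq_inner_right]
  ring

/-- Green identity for the Lagrange wave operator `A(x₁,x₂) = (ρ⁻¹x₂, div T∇x₁)` on
`X = H̊¹_{Γ₀}(Ω) × L²(Ω)` with the energy-plus-boundary inner product
`⟨x,y⟩_X = ⟨ρ⁻¹x₂,y₂⟩ + ⟨T∇x₁,∇y₁⟩ + ⟨k₁γ₀x₁,γ₀y₁⟩` and the boundary operators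
`B₁x = k₁γ₀x₁ + γ_ν T∇x₁`, `B₂x = γ₀(ρ⁻¹x₂)`:
`⟨Ax,y⟩_X + ⟨x,Ay⟩_X = ⟨B₁x,B₂y⟩ + ⟨B₂x,B₁y⟩` for all `x,y ∈ dom A`.
Here `u, v ∈ H̊¹_{Γ₀}(Ω)` represent `ρ⁻¹x₂`, `ρ⁻¹y₂`. -/
theorem stmt12
    {H1 L2 L2d B0 Bp Bm : Type*}
    [NormedAddCommGroup H1] [InnerProductSpace ℂ H1] [CompleteSpace H1]
    [NormedAddCommGroup L2] [InnerProductSpace ℂ L2] [CompleteSpace L2]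
    [NormedAddCommGroup L2d] [InnerProductSpace ℂ L2d] [CompleteSpace L2d]
    [NormedAddCommGroup B0] [InnerProductSpace ℂ B0] [CompleteSpace B0]
    [NormedAddCommGroup Bp] [InnerProductSpace ℂ Bp] [CompleteSpace Bp]
    [NormedAddCommGroup Bm] [InnerProductSpace ℂ Bm] [CompleteSpace Bm]
    (ι : H1 →L[ℂ] L2) (grad : H1 →L[ℂ] L2d) (γ : H1 →L[ℂ] Bp)
    (jp : Bp →L[ℂ] B0) (jm : B0 →L[ℂ] Bm)
    (pair : Bm → Bp → ℂ)
    (hpair : ∀ (h : B0) (u : Bp), pair (jm h) u = ⟪h, jp u⟫)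
    (hpair_add : ∀ f g : Bm, ∀ u : Bp, pair (f + g) u = pair f u + pair g u)
    (Ddiv : Submodule ℂ L2d) (dvg : Ddiv →ₗ[ℂ] L2) (γν : Ddiv →ₗ[ℂ] Bm)
    (hIbP : ∀ (F : Ddiv) (g : H1),
        ⟪dvg F, ι g⟫ = -⟪(F : L2d), grad g⟫ + pair (γν F) (γ g))
    (T : L2d →L[ℂ] L2d) (hT : T.IsPositive)
    (ρinv : L2 →L[ℂ] L2) (hρinv : ρinv.IsPositive)
    (k1 : B0 →L[ℂ] B0) (hk1 : k1.IsPositive)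
    (x₁ y₁ : H1) (x₂ y₂ : L2) (u v : H1)
    (hu : ι u = ρinv x₂) (hv : ι v = ρinv y₂)
    (hx : T (grad x₁) ∈ Ddiv) (hy : T (grad y₁) ∈ Ddiv) :
    (⟪ρinv (dvg ⟨T (grad x₁), hx⟩), y₂⟫ + ⟪T (grad u), grad y₁⟫
        + ⟪k1 (jp (γ u)), jp (γ y₁)⟫)
      + (⟪ρinv x₂, dvg ⟨T (grad y₁), hy⟩⟫ + ⟪T (grad x₁), grad v⟫
        + ⟪k1 (jp (γ x₁)), jp (γ v)⟫)
    = pair (γν ⟨T (grad x₁), hx⟩ + jm (k1 (jp (γ x₁)))) (γ v)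
      + conj (pair (γν ⟨T (grad y₁), hy⟩ + jm (k1 (jp (γ y₁)))) (γ u)) :=
  stmt12_general ι grad γ jp jm pair hpair hpair_add Ddiv dvg γν hIbP T hT ρinv hρinv k1 hk1 x₁ y₁
    x₂ y₂ u v hu hv hx hy
end

section
/- Let A_Θ be the wave operator with dissipative boundary conditions on X = H̊¹_{Γ₀}(Ω) × L²(Ω), with T and ρ strictly positive bounded multiplication operators and k₁, k₂ bounded positive semi-definite boundary operators satisfying the boundary condition B₁x + k₂B₂x = 0 on dom A_Θ. Then the embedding of dom A_Θ (with graph norm) into X is compact. -/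
open Filter

local notation "⟪" x ", " y "⟫" => @inner ℂ _ _ x y

lemma aux_sq_lt {G A B ε : ℝ} (h : G ^ 2 = A ^ 2 + B ^ 2) (hG : 0 ≤ G)
    (hA : A < ε / 2) (hB : B < ε / 2) (hA0 : 0 ≤ A) (hB0 : 0 ≤ B) (hε : 0 < ε) :
    G < ε := by nlinarith

lemma aux_subseq {E F : Type*} [NormedAddCommGroup E] [NormedAddCommGroup F]
    [NormedSpace ℂ E] [NormedSpace ℂ F] (f : E →L[ℂ] F) (hf : IsCompactOperator ⇑f)
    (y : ℕ → E) (C : ℝ) (hb : ∀ n, ‖y n‖ ≤ C) :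
    ∃ φ : ℕ → ℕ, StrictMono φ ∧ ∃ l : F,
      Tendsto (fun n => f (y (φ n))) atTop (nhds l) := by
  obtain ⟨K, hK, hsub⟩ :=
    IsCompactOperator.image_closedBall_subset_compact (f := (f : E →ₗ[ℂ] F)) hf C
  have hmem : ∀ n, f (y n) ∈ K := fun n =>
    hsub ⟨y n, Metric.mem_closedBall.2 (by simpa [dist_eq_norm] using hb n), rfl⟩
  obtain ⟨l, -, φ, hφ, hl⟩ := hK.tendsto_subseq hmem
  exact ⟨φ, hφ, l, hl⟩

/-- The domain of the wave operator with dissipative boundary conditions `B₁x + k₂B₂x = 0`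
embeds compactly (with the graph norm) into `X = H̊¹_{Γ₀}(Ω) × L²(Ω)`: every sequence in
`dom A_Θ` that is bounded in the graph norm has a subsequence converging in `X`.
Abstract setting as before; Rellich–Kondrachov compactness of the embedding
`ι : H¹ → L²` and of the `L²(Γ̃)`-trace `jp ∘ γ` are hypotheses. -/
theorem stmt15
    {H1 L2 L2d B0 Bp Bm : Type*}
    [NormedAddCommGroup H1] [InnerProductSpace ℂ H1] [CompleteSpace H1]
    [NormedAddCommGroup L2] [InnerProductSpace ℂ L2] [CompleteSpace L2]
    [NormedAddCommGroup L2d] [InnerProductSpace ℂ L2d] [CompleteSpace L2d]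
    [NormedAddCommGroup B0] [InnerProductSpace ℂ B0] [CompleteSpace B0]
    [NormedAddCommGroup Bp] [InnerProductSpace ℂ Bp] [CompleteSpace Bp]
    [NormedAddCommGroup Bm] [InnerProductSpace ℂ Bm] [CompleteSpace Bm]
    (ι : H1 →L[ℂ] L2) (grad : H1 →L[ℂ] L2d) (γ : H1 →L[ℂ] Bp)
    (jp : Bp →L[ℂ] B0) (jm : B0 →L[ℂ] Bm)
    (pair : Bm → Bp → ℂ)
    (hιinj : Function.Injective ι)
    (hnormH1 : ∀ f : H1, ‖f‖ ^ 2 = ‖ι f‖ ^ 2 + ‖grad f‖ ^ 2)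
    (hRellich : IsCompactOperator (⇑ι))
    (htraceCpt : IsCompactOperator (fun f : H1 => jp (γ f)))
    (hpair : ∀ (h : B0) (u : Bp), pair (jm h) u = ⟪h, jp u⟫)
    (Ddiv : Submodule ℂ L2d) (dvg : Ddiv →ₗ[ℂ] L2) (γν : Ddiv →ₗ[ℂ] Bm)
    (hIbP : ∀ (F : Ddiv) (g : H1),
        ⟪dvg F, ι g⟫ = -⟪(F : L2d), grad g⟫ + pair (γν F) (γ g))
    (T Tinv : L2d →L[ℂ] L2d) (hT : T.IsPositive)
    (hT1 : Tinv ∘L T = 1) (hT2 : T ∘L Tinv = 1)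
    (hTbelow : ∃ c > 0, ∀ u : L2d, c * ‖u‖ ^ 2 ≤ (⟪T u, u⟫).re)
    (ρinv ρ : L2 →L[ℂ] L2) (hρinv : ρinv.IsPositive)
    (hρ1 : ρ ∘L ρinv = 1) (hρ2 : ρinv ∘L ρ = 1)
    (hρbelow : ∃ c > 0, ∀ u : L2, c * ‖u‖ ^ 2 ≤ (⟪ρinv u, u⟫).re)
    (k1 k2 : B0 →L[ℂ] B0) (hk1 : k1.IsPositive) (hk2 : k2.IsPositive)
    (hFried : ∃ c > 0, ∀ f : H1,
        c * ‖f‖ ^ 2 ≤ (⟪T (grad f), grad f⟫).re + (⟪k1 (jp (γ f)), jp (γ f)⟫).re) :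
    ∀ (x : ℕ → H1 × L2) (h : ∀ n, T (grad (x n).1) ∈ Ddiv) (u : ℕ → H1),
      (∀ n, ι (u n) = ρinv (x n).2) →
      -- the boundary condition B₁x + k₂B₂x = 0
      (∀ n, γν ⟨T (grad (x n).1), h n⟩ + jm (k1 (jp (γ (x n).1)))
              + jm (k2 (jp (γ (u n)))) = 0) →
      -- boundedness in the graph norm
      (∃ C : ℝ, ∀ n, ‖x n‖ + ‖u n‖ + ‖dvg ⟨T (grad (x n).1), h n⟩‖ ≤ C) →
      ∃ φ : ℕ → ℕ, StrictMono φ ∧ ∃ l : H1 × L2,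
        Tendsto (fun n => x (φ n)) atTop (nhds l) := by
  intro x h u hu hbc hbound
  obtain ⟨C, hC⟩ := hbound
  obtain ⟨c, hc, hcT⟩ := hTbelow
  -- bounds on the pieces
  have hx1 : ∀ n, ‖(x n).1‖ ≤ C := by
    intro n
    have h1 := hC n
    have h2 : ‖(x n).1‖ ≤ ‖x n‖ := norm_fst_le (x n)
    have h3 : (0:ℝ) ≤ ‖u n‖ := norm_nonneg _
    have h4 : (0:ℝ) ≤ ‖dvg ⟨T (grad (x n).1), h n⟩‖ := norm_nonneg _
    linarith
  have hub : ∀ n, ‖u n‖ ≤ C := by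
    intro n
    have h1 := hC n
    have h3 : (0:ℝ) ≤ ‖x n‖ := norm_nonneg _
    have h4 : (0:ℝ) ≤ ‖dvg ⟨T (grad (x n).1), h n⟩‖ := norm_nonneg _
    linarith
  have hdb : ∀ n, ‖dvg ⟨T (grad (x n).1), h n⟩‖ ≤ C := by
    intro n
    have h1 := hC n
    have h3 : (0:ℝ) ≤ ‖x n‖ := norm_nonneg _
    have h4 : (0:ℝ) ≤ ‖u n‖ := norm_nonneg _
    linarith
  have hC0 : (0:ℝ) ≤ C := le_trans (norm_nonneg _) (hx1 0)
  -- trace operator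
  set tr : H1 →L[ℂ] B0 := jp.comp γ with htr_def
  have htr : IsCompactOperator ⇑tr := htraceCpt
  -- four successive subsequence extractions
  obtain ⟨φ₁, hφ₁, lA, hA⟩ := aux_subseq ι hRellich (fun n => (x n).1) C (fun n => hx1 n)
  obtain ⟨φ₂, hφ₂, lB, hB⟩ := aux_subseq tr htr (fun n => (x (φ₁ n)).1) C (fun n => hx1 _)
  obtain ⟨φ₃, hφ₃, lC, hC3⟩ := aux_subseq tr htr (fun n => u (φ₁ (φ₂ n))) C (fun n => hub _)
  obtain ⟨φ₄, hφ₄, lD, hD⟩ := aux_subseq ι hRellich (fun n => u (φ₁ (φ₂ (φ₃ n)))) C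
    (fun n => hub _)
  set φ : ℕ → ℕ := fun n => φ₁ (φ₂ (φ₃ (φ₄ n))) with hφdef
  have hφmono : StrictMono φ := hφ₁.comp (hφ₂.comp (hφ₃.comp hφ₄))
  -- the four convergences along φ
  have hA' : Tendsto (fun n => ι ((x (φ n)).1)) atTop (nhds lA) :=
    hA.comp ((hφ₂.comp (hφ₃.comp hφ₄)).tendsto_atTop)
  have hB' : Tendsto (fun n => tr ((x (φ n)).1)) atTop (nhds lB) :=
    hB.comp ((hφ₃.comp hφ₄).tendsto_atTop)
  have hC' : Tendsto (fun n => tr (u (φ n))) atTop (nhds lC) :=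
    hC3.comp (hφ₄.tendsto_atTop)
  have hD' : Tendsto (fun n => ι (u (φ n))) atTop (nhds lD) := hD
  have cA := hA'.cauchySeq
  have cB := hB'.cauchySeq
  have cCC := hC'.cauchySeq
  -- the key estimate
  have key : ∀ p q : ℕ,
      c * ‖grad ((x p).1 - (x q).1)‖ ^ 2 ≤
        (‖k1‖ * ‖tr ((x p).1) - tr ((x q).1)‖ + ‖k2‖ * ‖tr (u p) - tr (u q)‖) *
            ‖tr ((x p).1) - tr ((x q).1)‖
          + 2 * C * ‖ι ((x p).1) - ι ((x q).1)‖ := by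
    intro p q
    set g : H1 := (x p).1 - (x q).1 with hgdef
    have e1 : ∀ k : ℕ,
        ⟪T (grad ((x k).1)), grad g⟫ =
          ⟪-(k1 (jp (γ ((x k).1))) + k2 (jp (γ (u k)))), jp (γ g)⟫
            - ⟪dvg ⟨T (grad ((x k).1)), h k⟩, ι g⟫ := by
      intro k
      have hb := hbc k
      have hγν : γν ⟨T (grad ((x k).1)), h k⟩ =
          jm (-(k1 (jp (γ ((x k).1))) + k2 (jp (γ (u k))))) := by
        rw [map_neg, map_add]
        rw [add_assoc] at hb
        exact eq_neg_of_add_eq_zero_left hb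
      have hib := hIbP ⟨T (grad ((x k).1)), h k⟩ g
      rw [hγν, hpair] at hib
      simp only [Submodule.coe_mk] at hib
      linear_combination hib
    have hTg : T (grad g) = T (grad ((x p).1)) - T (grad ((x q).1)) := by
      simp [hgdef, map_sub]
    have e2 : ⟪T (grad g), grad g⟫ =
        ⟪(k1 (jp (γ ((x q).1))) + k2 (jp (γ (u q))))
            - (k1 (jp (γ ((x p).1))) + k2 (jp (γ (u p)))), jp (γ g)⟫
          - ⟪dvg ⟨T (grad ((x p).1)), h p⟩ - dvg ⟨T (grad ((x q).1)), h q⟩, ι g⟫ := by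
      rw [hTg, inner_sub_left, e1 p, e1 q, inner_sub_left, inner_sub_left,
        inner_neg_left, inner_neg_left]
      ring
    have e3 : c * ‖grad g‖ ^ 2 ≤ (⟪T (grad g), grad g⟫).re := hcT _
    have e4 : (⟪T (grad g), grad g⟫).re ≤
        ‖(k1 (jp (γ ((x q).1))) + k2 (jp (γ (u q))))
            - (k1 (jp (γ ((x p).1))) + k2 (jp (γ (u p))))‖ * ‖jp (γ g)‖
          + ‖dvg ⟨T (grad ((x p).1)), h p⟩ - dvg ⟨T (grad ((x q).1)), h q⟩‖ * ‖ι g‖ := by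
      rw [e2]
      calc (⟪_, jp (γ g)⟫ - ⟪_, ι g⟫).re
          ≤ ‖(⟪_, jp (γ g)⟫ - ⟪_, ι g⟫ : ℂ)‖ := Complex.re_le_norm _
        _ ≤ ‖(⟪_, jp (γ g)⟫ : ℂ)‖ + ‖(⟪_, ι g⟫ : ℂ)‖ := norm_sub_le _ _
        _ ≤ _ := add_le_add (norm_inner_le_norm _ _) (norm_inner_le_norm _ _)
    -- bound the difference of boundary terms
    have e5 : ‖(k1 (jp (γ ((x q).1))) + k2 (jp (γ (u q))))
            - (k1 (jp (γ ((x p).1))) + k2 (jp (γ (u p))))‖ ≤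
        ‖k1‖ * ‖tr ((x p).1) - tr ((x q).1)‖ + ‖k2‖ * ‖tr (u p) - tr (u q)‖ := by
      have hrw : (k1 (jp (γ ((x q).1))) + k2 (jp (γ (u q))))
            - (k1 (jp (γ ((x p).1))) + k2 (jp (γ (u p))))
          = k1 (tr ((x q).1) - tr ((x p).1)) + k2 (tr (u q) - tr (u p)) := by
        simp only [htr_def, ContinuousLinearMap.comp_apply, map_sub]
        abel
      rw [hrw]
      calc ‖k1 (tr ((x q).1) - tr ((x p).1)) + k2 (tr (u q) - tr (u p))‖
          ≤ ‖k1 (tr ((x q).1) - tr ((x p).1))‖ + ‖k2 (tr (u q) - tr (u p))‖ :=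
            norm_add_le _ _
        _ ≤ ‖k1‖ * ‖tr ((x q).1) - tr ((x p).1)‖ + ‖k2‖ * ‖tr (u q) - tr (u p)‖ :=
            add_le_add (k1.le_opNorm _) (k2.le_opNorm _)
        _ = ‖k1‖ * ‖tr ((x p).1) - tr ((x q).1)‖ + ‖k2‖ * ‖tr (u p) - tr (u q)‖ := by
            rw [norm_sub_rev (tr ((x q).1)), norm_sub_rev (tr (u q))]
    have e6 : ‖dvg ⟨T (grad ((x p).1)), h p⟩ - dvg ⟨T (grad ((x q).1)), h q⟩‖ ≤ 2 * C := by
      calc ‖dvg ⟨T (grad ((x p).1)), h p⟩ - dvg ⟨T (grad ((x q).1)), h q⟩‖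
          ≤ ‖dvg ⟨T (grad ((x p).1)), h p⟩‖ + ‖dvg ⟨T (grad ((x q).1)), h q⟩‖ :=
            norm_sub_le _ _
        _ ≤ 2 * C := by have := hdb p; have := hdb q; linarith
    have e7 : ‖jp (γ g)‖ = ‖tr ((x p).1) - tr ((x q).1)‖ := by
      simp [hgdef, htr_def, map_sub]
    have e8 : ‖ι g‖ = ‖ι ((x p).1) - ι ((x q).1)‖ := by simp [hgdef, map_sub]
    have hn1 : (0:ℝ) ≤ ‖jp (γ g)‖ := norm_nonneg _
    have hn2 : (0:ℝ) ≤ ‖ι g‖ := norm_nonneg _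
    calc c * ‖grad g‖ ^ 2 ≤ (⟪T (grad g), grad g⟫).re := e3
      _ ≤ _ * ‖jp (γ g)‖ + _ * ‖ι g‖ := e4
      _ ≤ (‖k1‖ * ‖tr ((x p).1) - tr ((x q).1)‖ + ‖k2‖ * ‖tr (u p) - tr (u q)‖)
            * ‖jp (γ g)‖ + 2 * C * ‖ι g‖ :=
          add_le_add (mul_le_mul_of_nonneg_right e5 hn1)
            (mul_le_mul_of_nonneg_right e6 hn2)
      _ = _ := by rw [e7, e8]
  -- Cauchy sequence of gradients along φ
  have cGrad : CauchySeq (fun n => grad ((x (φ n)).1)) := by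
    rw [Metric.cauchySeq_iff]
    intro ε hε
    set K : ℝ := ‖k1‖ + ‖k2‖ + 2 * C + 1 with hKdef
    have hK : 0 < K := by positivity
    set δ : ℝ := min 1 (c * ε ^ 2 / (2 * K)) with hδdef
    have hδpos : 0 < δ := lt_min one_pos (by positivity)
    obtain ⟨N₁, hN₁⟩ := Metric.cauchySeq_iff.1 cA δ hδpos
    obtain ⟨N₂, hN₂⟩ := Metric.cauchySeq_iff.1 cB δ hδpos
    obtain ⟨N₃, hN₃⟩ := Metric.cauchySeq_iff.1 cCC δ hδpos
    refine ⟨max N₁ (max N₂ N₃), fun m hm n hn => ?_⟩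
    have h1 := hN₁ m (le_trans (le_max_left _ _) hm) n (le_trans (le_max_left _ _) hn)
    have h2 := hN₂ m (le_trans (le_trans (le_max_left _ _) (le_max_right _ _)) hm)
      n (le_trans (le_trans (le_max_left _ _) (le_max_right _ _)) hn)
    have h3 := hN₃ m (le_trans (le_trans (le_max_right _ _) (le_max_right _ _)) hm)
      n (le_trans (le_trans (le_max_right _ _) (le_max_right _ _)) hn)
    rw [dist_eq_norm] at h1 h2 h3 ⊢
    have hk := key (φ m) (φ n)
    rw [← map_sub]
    set a : ℝ := ‖ι ((x (φ m)).1) - ι ((x (φ n)).1)‖ with hadef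
    set b : ℝ := ‖tr ((x (φ m)).1) - tr ((x (φ n)).1)‖ with hbdef
    set d : ℝ := ‖tr (u (φ m)) - tr (u (φ n))‖ with hddef
    set s : ℝ := ‖grad ((x (φ m)).1 - (x (φ n)).1)‖ with hsdef
    have hδ1 : δ ≤ 1 := min_le_left _ _
    have h2K : (0:ℝ) < 2 * K := by positivity
    have hδ2 : δ * (2 * K) ≤ c * ε ^ 2 := by
      have hmin : δ ≤ c * ε ^ 2 / (2 * K) := min_le_right _ _
      rw [le_div_iff₀ h2K] at hmin
      exact hmin
    have ha0 : (0:ℝ) ≤ a := norm_nonneg _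
    have hb0 : (0:ℝ) ≤ b := norm_nonneg _
    have hd0 : (0:ℝ) ≤ d := norm_nonneg _
    have hs0 : (0:ℝ) ≤ s := norm_nonneg _
    have hk10 : (0:ℝ) ≤ ‖k1‖ := norm_nonneg _
    have hk20 : (0:ℝ) ≤ ‖k2‖ := norm_nonneg _
    have q0 : ‖k1‖ * b + ‖k2‖ * d ≤ (‖k1‖ + ‖k2‖) * δ := by
      have := mul_le_mul_of_nonneg_left h2.le hk10
      have := mul_le_mul_of_nonneg_left h3.le hk20
      linarith
    have q1 : (‖k1‖ * b + ‖k2‖ * d) * b ≤ (‖k1‖ + ‖k2‖) * δ * δ :=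
      mul_le_mul q0 h2.le hb0 (by positivity)
    have q1' : (‖k1‖ + ‖k2‖) * δ * δ ≤ (‖k1‖ + ‖k2‖) * δ := by
      have hcoef : (0:ℝ) ≤ (‖k1‖ + ‖k2‖) * δ := by positivity
      calc (‖k1‖ + ‖k2‖) * δ * δ ≤ (‖k1‖ + ‖k2‖) * δ * 1 :=
            mul_le_mul_of_nonneg_left hδ1 hcoef
        _ = (‖k1‖ + ‖k2‖) * δ := mul_one _
    have q2 : 2 * C * a ≤ 2 * C * δ := mul_le_mul_of_nonneg_left h1.le (by positivity)
    have q3 : c * s ^ 2 < c * ε ^ 2 := by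
      have hmid : c * s ^ 2 ≤ (‖k1‖ + ‖k2‖) * δ + 2 * C * δ := by linarith
      have hKδ : (‖k1‖ + ‖k2‖) * δ + 2 * C * δ < K * δ := by
        have : (‖k1‖ + ‖k2‖ + 2 * C) * δ < K * δ := by
          apply mul_lt_mul_of_pos_right _ hδpos
          rw [hKdef]; linarith
        linarith [this]
      have hcε : 0 < c * ε ^ 2 := by positivity
      linarith
    have hs2 : s ^ 2 < ε ^ 2 := lt_of_mul_lt_mul_left q3 hc.le
    exact lt_of_pow_lt_pow_left₀ 2 hε.le hs2
  -- the first components form a Cauchy sequence in H1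
  have cV : CauchySeq (fun n => (x (φ n)).1) := by
    rw [Metric.cauchySeq_iff]
    intro ε hε
    have hε2 : 0 < ε / 2 := by positivity
    obtain ⟨N₁, hN₁⟩ := Metric.cauchySeq_iff.1 cA (ε / 2) hε2
    obtain ⟨N₂, hN₂⟩ := Metric.cauchySeq_iff.1 cGrad (ε / 2) hε2
    refine ⟨max N₁ N₂, fun m hm n hn => ?_⟩
    have h1 := hN₁ m (le_trans (le_max_left _ _) hm) n (le_trans (le_max_left _ _) hn)
    have h2 := hN₂ m (le_trans (le_max_right _ _) hm) n (le_trans (le_max_right _ _) hn)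
    rw [dist_eq_norm] at h1 h2 ⊢
    have hn2 := hnormH1 ((x (φ m)).1 - (x (φ n)).1)
    rw [map_sub, map_sub] at hn2
    exact aux_sq_lt hn2 (norm_nonneg _) h1 h2 (norm_nonneg _) (norm_nonneg _) hε
  obtain ⟨l₁, hl₁⟩ := cauchySeq_tendsto_of_complete cV
  -- second component
  have hx2 : ∀ k, (x k).2 = ρ (ι (u k)) := by
    intro k
    rw [hu k]
    have := ContinuousLinearMap.ext_iff.mp hρ1 ((x k).2)
    simpa using this.symm
  have h2t : Tendsto (fun n => (x (φ n)).2) atTop (nhds (ρ lD)) := by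
    have := (ρ.continuous.tendsto lD).comp hD'
    simpa [Function.comp_def, hx2] using this
  exact ⟨φ, hφmono, (l₁, ρ lD), hl₁.prodMk_nhds h2t⟩
end
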